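/- Let x₁, x₂ : ℕ → ℂ satisfy ∑_n (1+n²)²·|x_ν[n]| < ∞ and ∑_m m·x_ν[m] = 0 for ν = 1, 2. Then ∑_k (1+k²)·|(G₀x_ν)[k]| < ∞ for ν = 1, 2, the double series below converges absolutely, and ∑_{n,m} conj(x₁[n])·G₂[n,m]·x₂[m] = −∑_k conj((G₀x₁)[k])·(G₀x₂)[k]. -/
import Mathlib

set_option maxHeartbeats 1000000


noncomputable section

/-- Complex sequences indexed by ℕ = {1,2,…}. -/
abbrev NSeq : Type := ℕ+ → ℂ

/-- The kernel G₂[n,m] = −(1/6)·min(n,m) + (1/6)·min(n,m)³ + (1/2)·n·m·max(n,m). -/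
def G2ker (n m : ℕ+) : ℝ :=
  -(1/6) * ((min n m : ℕ) : ℝ) + (1/6) * ((min n m : ℕ) : ℝ) ^ 3
    + (1/2) * ((n : ℕ) : ℝ) * ((m : ℕ) : ℝ) * ((max n m : ℕ) : ℝ)

namespace G2P

open Complex

def w (n : ℕ+) : ℝ := (1 + ((n:ℕ):ℝ)^2)^2

def cC (k m : ℕ+) : ℂ := ((min (k:ℕ) (m:ℕ) : ℕ) : ℂ) - ((m:ℕ):ℂ)

lemma one_le_coe (n : ℕ+) : (1:ℝ) ≤ ((n:ℕ):ℝ) := by exact_mod_cast n.one_le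

lemma w_nonneg (n : ℕ+) : 0 ≤ w n := by unfold w; positivity

lemma one_le_w (n : ℕ+) : 1 ≤ w n := by unfold w; nlinarith [one_le_coe n]

lemma coe_le_w (n : ℕ+) : ((n:ℕ):ℝ) ≤ w n := by
  unfold w; nlinarith [one_le_coe n]

lemma sq_le_w (n : ℕ+) : ((n:ℕ):ℝ)^2 ≤ w n := by
  unfold w; nlinarith [one_le_coe n]

lemma cC_zero {k m : ℕ+} (h : m ≤ k) : cC k m = 0 := by
  have h' : (m:ℕ) ≤ (k:ℕ) := by exact_mod_cast h
  unfold cC; rw [min_eq_right h', sub_self]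

lemma min_coe_le_right (k m : ℕ+) : ((min (k:ℕ) (m:ℕ) : ℕ):ℝ) ≤ ((m:ℕ):ℝ) := by
  exact_mod_cast min_le_right (k:ℕ) (m:ℕ)

lemma norm_cC (k m : ℕ+) : ‖cC k m‖ = ((m:ℕ):ℝ) - ((min (k:ℕ) (m:ℕ) : ℕ):ℝ) := by
  have h : cC k m = ((((min (k:ℕ) (m:ℕ) : ℕ):ℝ) - ((m:ℕ):ℝ) : ℝ) : ℂ) := by
    unfold cC; rw [Complex.ofReal_sub]; norm_cast
  rw [h]
  rw [Complex.norm_real, Real.norm_eq_abs, abs_sub_comm]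
  exact _root_.abs_of_nonneg (by linarith [min_coe_le_right k m])

lemma norm_cC_le (k m : ℕ+) : ‖cC k m‖ ≤ ((m:ℕ):ℝ) := by
  rw [norm_cC]
  have : (0:ℝ) ≤ ((min (k:ℕ) (m:ℕ) : ℕ):ℝ) := by positivity
  linarith

lemma star_cC (k m : ℕ+) : star (cC k m) = cC k m := by
  unfold cC; simp

section X
variable {x : NSeq}

lemma sumXR (h : Summable fun n : ℕ+ => w n * ‖x n‖) {f : ℕ+ → ℝ}
    (h0 : ∀ n, 0 ≤ f n) (hf : ∀ n, f n ≤ w n * ‖x n‖) : Summable f :=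
  Summable.of_nonneg_of_le h0 hf h

lemma sumX (h : Summable fun n : ℕ+ => w n * ‖x n‖) {f : ℕ+ → ℂ}
    (hf : ∀ n, ‖f n‖ ≤ w n * ‖x n‖) : Summable f :=
  Summable.of_norm (sumXR h (fun n => norm_nonneg _) hf)

lemma summable_coe_mul (h : Summable fun n : ℕ+ => w n * ‖x n‖) :
    Summable fun m : ℕ+ => ((m:ℕ):ℂ) * x m := by
  apply sumX h
  intro n
  rw [norm_mul, Complex.norm_natCast]
  exact mul_le_mul_of_nonneg_right (coe_le_w n) (norm_nonneg _)

lemma summable_min_mul (h : Summable fun n : ℕ+ => w n * ‖x n‖) (k : ℕ+) :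
    Summable fun m : ℕ+ => ((min (k:ℕ) (m:ℕ) : ℕ):ℂ) * x m := by
  apply sumX h
  intro m
  rw [norm_mul, Complex.norm_natCast]
  have h1 : ((min (k:ℕ) (m:ℕ) : ℕ):ℝ) ≤ w m := le_trans (min_coe_le_right k m) (coe_le_w m)
  exact mul_le_mul_of_nonneg_right h1 (norm_nonneg _)

lemma summable_cC_mul (h : Summable fun n : ℕ+ => w n * ‖x n‖) (k : ℕ+) :
    Summable fun m : ℕ+ => cC k m * x m := by
  apply sumX h
  intro m
  rw [norm_mul]
  exact mul_le_mul (le_trans (norm_cC_le k m) (coe_le_w m)) le_rfl (norm_nonneg _) (w_nonneg m)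

lemma A_eq (h : Summable fun n : ℕ+ => w n * ‖x n‖)
    (m0 : (∑' m : ℕ+, ((m : ℕ) : ℂ) * x m) = 0) (k : ℕ+) :
    (∑' m : ℕ+, ((min (k:ℕ) (m:ℕ) : ℕ) : ℂ) * x m) = ∑' m : ℕ+, cC k m * x m := by
  have hfun : (fun m : ℕ+ => cC k m * x m)
      = fun m : ℕ+ => ((min (k:ℕ) (m:ℕ) : ℕ):ℂ) * x m - ((m:ℕ):ℂ) * x m := by
    funext m; unfold cC; ring
  rw [hfun, Summable.tsum_sub (summable_min_mul h k) (summable_coe_mul h), m0, sub_zero]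

end X

lemma poly_sum (N M : ℂ) (t : ℕ) :
    ∑ i ∈ Finset.range t, ((i:ℂ)+1-N)*((i:ℂ)+1-M)
      = (t:ℂ)*((t:ℂ)+1)*(2*(t:ℂ)+1)/6 - (N+M)*((t:ℂ)*((t:ℂ)+1))/2 + N*M*(t:ℂ) := by
  induction t with
  | zero => simp
  | succ t ih =>
    rw [Finset.sum_range_succ, ih]
    push_cast
    ring

lemma cC_succ (i : ℕ) (n : ℕ+) :
    cC (Equiv.pnatEquivNat.symm i) n
      = if i + 1 ≤ (n:ℕ) then ((i:ℂ) + 1 - ((n:ℕ):ℂ)) else 0 := by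
  have hc : ((Equiv.pnatEquivNat.symm i : ℕ+) : ℕ) = i + 1 := by
    simp [Equiv.pnatEquivNat]
  unfold cC
  rw [hc]
  split_ifs with h
  · rw [min_eq_left h]; push_cast; ring
  · rw [min_eq_right (by omega)]; ring

lemma Qsum (n m : ℕ+) :
    (∑' k : ℕ+, cC k n * cC k m)
      = ((n:ℕ):ℂ) * ((m:ℕ):ℂ) * (((n:ℕ):ℂ) + ((m:ℕ):ℂ) - 1) / 2 - ((G2ker n m : ℝ) : ℂ) := by
  rw [← Equiv.pnatEquivNat.symm.tsum_eq (fun k : ℕ+ => cC k n * cC k m)]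
  have hz : ∀ i ∉ Finset.range (min (n:ℕ) (m:ℕ)),
      cC (Equiv.pnatEquivNat.symm i) n * cC (Equiv.pnatEquivNat.symm i) m = 0 := by
    intro i hi
    simp only [Finset.mem_range, not_lt, le_min_iff] at hi
    rcases le_or_gt (n:ℕ) (m:ℕ) with h | h
    · rw [cC_succ i n, if_neg (by omega)]; ring
    · rw [cC_succ i m, if_neg (by omega)]; ring
  rw [tsum_eq_sum hz]
  have hcong : ∀ i ∈ Finset.range (min (n:ℕ) (m:ℕ)),
      cC (Equiv.pnatEquivNat.symm i) n * cC (Equiv.pnatEquivNat.symm i) m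
        = ((i:ℂ)+1-((n:ℕ):ℂ))*((i:ℂ)+1-((m:ℕ):ℂ)) := by
    intro i hi
    simp only [Finset.mem_range, lt_min_iff] at hi
    rw [cC_succ i n, if_pos (by omega), cC_succ i m, if_pos (by omega)]
  rw [Finset.sum_congr rfl hcong, poly_sum]
  rcases le_total (n:ℕ) (m:ℕ) with h | h
  · rw [min_eq_left h]
    simp only [G2ker, min_eq_left h, max_eq_right h]
    push_cast
    ring
  · rw [min_eq_right h]
    simp only [G2ker, min_eq_right h, max_eq_left h]
    push_cast
    ring

lemma G2_nonneg (n m : ℕ+) : 0 ≤ G2ker n m := by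
  have h1 := one_le_coe n
  have h2 := one_le_coe m
  have hmin : (1:ℝ) ≤ ((min (n:ℕ) (m:ℕ) : ℕ):ℝ) := by
    rcases le_total (n:ℕ) (m:ℕ) with h | h
    · rw [min_eq_left h]; exact h1
    · rw [min_eq_right h]; exact h2
  have hmax : (0:ℝ) ≤ ((max (n:ℕ) (m:ℕ) : ℕ):ℝ) := by positivity
  simp only [G2ker]
  have hmin0 : (0:ℝ) ≤ ((min (n:ℕ) (m:ℕ) : ℕ):ℝ) := le_trans zero_le_one hmin
  have hc : ((min (n:ℕ) (m:ℕ) : ℕ):ℝ) ≤ ((min (n:ℕ) (m:ℕ) : ℕ):ℝ)^3 := by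
    nlinarith [mul_nonneg (mul_nonneg hmin0 hmin0) (sub_nonneg.mpr hmin)]
  have hX : (0:ℝ) ≤ ((n:ℕ):ℝ) * ((m:ℕ):ℝ) * ((max (n:ℕ) (m:ℕ) : ℕ):ℝ) :=
    mul_nonneg (mul_nonneg (le_trans zero_le_one h1) (le_trans zero_le_one h2)) hmax
  linarith

lemma G2_bound (n m : ℕ+) : |G2ker n m| ≤ w n * w m := by
  rw [_root_.abs_of_nonneg (G2_nonneg n m)]
  have h1 := one_le_coe n
  have h2 := one_le_coe m
  have key : ∀ a b : ℝ, 1 ≤ a → 1 ≤ b →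
      -(1/6)*a + (1/6)*a^3 + (1/2)*a*b*b ≤ (1+a^2)^2 * (1+b^2)^2 := by
    intro a b ha hb
    have ha0 : (0:ℝ) ≤ a := le_trans zero_le_one ha
    have s1 : -(1/6)*a + (1/6)*a^3 + (1/2)*a*b*b ≤ a^3 + a*b^2 := by
      nlinarith [pow_nonneg ha0 3, mul_nonneg ha0 (sq_nonneg b)]
    have s2 : a^3 ≤ (1+a^2)^2 := by
      nlinarith [mul_nonneg (mul_nonneg (mul_nonneg ha0 ha0) ha0) (sub_nonneg.mpr ha),
        sq_nonneg a]
    have s3 : a ≤ (1+a^2)^2 := by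
      nlinarith [sq_nonneg (a-1), sq_nonneg (a^2)]
    have s4 : a*b^2 ≤ (1+a^2)^2 * b^2 := mul_le_mul_of_nonneg_right s3 (sq_nonneg b)
    have s5 : (1+a^2)^2 + (1+a^2)^2*b^2 ≤ (1+a^2)^2*(1+b^2)^2 := by
      nlinarith [mul_nonneg (mul_nonneg (sq_nonneg (1+a^2))
        (by positivity : (0:ℝ) ≤ 1+b^2)) (sq_nonneg b)]
    nlinarith [s1, s2, s4, s5]
  rcases le_total (n:ℕ) (m:ℕ) with h | h
  · simp only [G2ker, min_eq_left h, max_eq_right h, w]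
    exact key ((n:ℕ):ℝ) ((m:ℕ):ℝ) h1 h2
  · simp only [G2ker, min_eq_right h, max_eq_left h, w]
    have := key ((m:ℕ):ℝ) ((n:ℕ):ℝ) h2 h1
    nlinarith [this]

end G2P

namespace G2P

lemma RCnorm_conj (z : ℂ) : ‖(starRingEnd ℂ) z‖ = ‖z‖ := RCLike.norm_conj z

def HH (x₁ x₂ : NSeq) : (ℕ+ × ℕ+) × ℕ+ → ℂ :=
  fun q => (starRingEnd ℂ) (x₁ q.1.1) * x₂ q.1.2 * (cC q.2 q.1.1 * cC q.2 q.1.2)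

lemma HH_zero (x₁ x₂ : NSeq) {n : ℕ+} (m k : ℕ+) (h : n ≤ k) : HH x₁ x₂ ((n,m),k) = 0 := by
  simp only [HH]
  rw [cC_zero h]
  ring

lemma norm_HH_le (x₁ x₂ : NSeq) (n m k : ℕ+) :
    ‖HH x₁ x₂ ((n,m),k)‖ ≤ ‖x₁ n‖ * ‖x₂ m‖ * (((n:ℕ):ℝ) * ((m:ℕ):ℝ)) := by
  simp only [HH]
  rw [norm_mul, norm_mul, norm_mul, RCnorm_conj]
  have hn := norm_cC_le k n
  have hm := norm_cC_le k m
  have h0 : (0:ℝ) ≤ ‖cC k n‖ := norm_nonneg _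
  have h1 : (0:ℝ) ≤ ‖cC k m‖ := norm_nonneg _
  nlinarith [norm_nonneg (x₁ n), norm_nonneg (x₂ m),
    mul_nonneg (norm_nonneg (x₁ n)) (norm_nonneg (x₂ m)),
    mul_le_mul hn hm h1 (by positivity : (0:ℝ) ≤ ((n:ℕ):ℝ))]

lemma not_mem_Ico {n k : ℕ+} (hk : k ∉ Finset.Ico 1 n) : n ≤ k := by
  simp only [Finset.mem_Ico] at hk
  push_neg at hk
  exact hk k.one_le

lemma HH_norm_summable {x₁ x₂ : NSeq}
    (h1 : Summable fun n : ℕ+ => w n * ‖x₁ n‖) (h2 : Summable fun n : ℕ+ => w n * ‖x₂ n‖) :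
    Summable fun q : (ℕ+ × ℕ+) × ℕ+ => ‖HH x₁ x₂ q‖ := by
  rw [summable_prod_of_nonneg (fun q => norm_nonneg _)]
  have hzero : ∀ (n m k : ℕ+), k ∉ Finset.Ico 1 n → ‖HH x₁ x₂ ((n,m),k)‖ = 0 := by
    intro n m k hk
    rw [HH_zero x₁ x₂ m k (not_mem_Ico hk), norm_zero]
  constructor
  · rintro ⟨n, m⟩
    exact summable_of_ne_finset_zero (s := Finset.Ico 1 n) (fun k hk => hzero n m k hk)
  · have key : ∀ p : ℕ+ × ℕ+, (∑' k : ℕ+, ‖HH x₁ x₂ (p, k)‖)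
        ≤ (w p.1 * ‖x₁ p.1‖) * (w p.2 * ‖x₂ p.2‖) := by
      rintro ⟨n, m⟩
      rw [tsum_eq_sum (fun k hk => hzero n m k hk)]
      have hcard : ((Finset.Ico (1:ℕ+) n).card : ℝ) ≤ ((n:ℕ):ℝ) := by
        rw [PNat.card_Ico]
        exact_mod_cast Nat.sub_le (n:ℕ) 1
      have hstep : ∑ k ∈ Finset.Ico (1:ℕ+) n, ‖HH x₁ x₂ ((n,m),k)‖
          ≤ ((Finset.Ico (1:ℕ+) n).card) • (‖x₁ n‖ * ‖x₂ m‖ * (((n:ℕ):ℝ) * ((m:ℕ):ℝ))) :=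
        Finset.sum_le_card_nsmul _ _ _ (fun k _ => norm_HH_le x₁ x₂ n m k)
      rw [nsmul_eq_mul] at hstep
      have h3 : ((n:ℕ):ℝ)^2 ≤ w n := sq_le_w n
      have h4 : ((m:ℕ):ℝ) ≤ w m := coe_le_w m
      have h5 : ((n:ℕ):ℝ)^2 * ((m:ℕ):ℝ) ≤ w n * w m :=
        mul_le_mul h3 h4 (by positivity) (w_nonneg n)
      have h6 : (0:ℝ) ≤ ‖x₁ n‖ * ‖x₂ m‖ :=
        mul_nonneg (norm_nonneg _) (norm_nonneg _)
      nlinarith [hstep, hcard, h5, h6,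
        mul_nonneg (mul_nonneg (norm_nonneg (x₁ n)) (norm_nonneg (x₂ m)))
          (by positivity : (0:ℝ) ≤ ((n:ℕ):ℝ) * ((m:ℕ):ℝ))]
    exact Summable.of_nonneg_of_le (fun p => tsum_nonneg (fun k => norm_nonneg _)) key
      (h1.mul_of_nonneg h2 (fun n => mul_nonneg (w_nonneg n) (norm_nonneg _))
        (fun m => mul_nonneg (w_nonneg m) (norm_nonneg _)))

def gfun (x : NSeq) : ℕ+ × ℕ+ → ℝ :=
  fun p => (1 + ((p.2:ℕ):ℝ)^2) * (‖cC p.2 p.1‖ * ‖x p.1‖)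

lemma step1 {x : NSeq} (h : Summable fun n : ℕ+ => w n * ‖x n‖)
    (m0 : (∑' m : ℕ+, ((m : ℕ) : ℂ) * x m) = 0) :
    Summable fun k : ℕ+ => (1 + ((k:ℕ):ℝ)^2) * ‖∑' m : ℕ+, ((min (k:ℕ) (m:ℕ) : ℕ):ℂ) * x m‖ := by
  have hg0 : ∀ p : ℕ+ × ℕ+, 0 ≤ gfun x p := by
    intro p; unfold gfun; positivity
  have hzero : ∀ (m k : ℕ+), k ∉ Finset.Ico 1 m → gfun x (m, k) = 0 := by
    intro m k hk
    unfold gfun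
    rw [cC_zero (not_mem_Ico hk)]
    simp
  have hgsum : Summable (gfun x) := by
    rw [summable_prod_of_nonneg hg0]
    constructor
    · intro m
      exact summable_of_ne_finset_zero (s := Finset.Ico 1 m) (hzero m)
    · apply sumXR h (fun m => tsum_nonneg fun k => hg0 _)
      intro m
      rw [tsum_eq_sum (hzero m)]
      have hb : ∀ k ∈ Finset.Ico (1:ℕ+) m,
          gfun x (m,k) ≤ (1 + ((m:ℕ):ℝ)^2) * (((m:ℕ):ℝ) * ‖x m‖) := by
        intro k hk
        have hkm : (k:ℕ) ≤ (m:ℕ) := by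
          have := (Finset.mem_Ico.mp hk).2
          exact_mod_cast le_of_lt this
        unfold gfun
        apply mul_le_mul
        · have : ((k:ℕ):ℝ) ≤ ((m:ℕ):ℝ) := by exact_mod_cast hkm
          nlinarith
        · exact mul_le_mul_of_nonneg_right (norm_cC_le k m) (norm_nonneg _)
        · positivity
        · positivity
      have hstep := Finset.sum_le_card_nsmul _ _ _ hb
      rw [nsmul_eq_mul] at hstep
      have hcard : ((Finset.Ico (1:ℕ+) m).card : ℝ) ≤ ((m:ℕ):ℝ) := by
        rw [PNat.card_Ico]
        exact_mod_cast Nat.sub_le (m:ℕ) 1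
      have h1 := one_le_coe m
      have hwm : w m = (1 + ((m:ℕ):ℝ)^2)^2 := rfl
      nlinarith [hstep, hcard, norm_nonneg (x m),
        mul_nonneg (mul_nonneg (by positivity : (0:ℝ) ≤ 1 + ((m:ℕ):ℝ)^2)
          (by positivity : (0:ℝ) ≤ ((m:ℕ):ℝ))) (norm_nonneg (x m))]
  have hswap : Summable fun q : ℕ+ × ℕ+ => gfun x q.swap := hgsum.prod_symm
  have hmarg : Summable fun k : ℕ+ => ∑' m : ℕ+, gfun x (m, k) :=
    ((summable_prod_of_nonneg (fun q => hg0 q.swap)).mp hswap).2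
  apply Summable.of_nonneg_of_le (fun k => by positivity) _ hmarg
  intro k
  rw [A_eq h m0 k]
  have hs : Summable fun m : ℕ+ => ‖cC k m‖ * ‖x m‖ :=
    sumXR h (fun m => by positivity)
      (fun m => mul_le_mul (le_trans (norm_cC_le k m) (coe_le_w m)) le_rfl
        (norm_nonneg _) (w_nonneg m))
  have hnorm : ‖∑' m : ℕ+, cC k m * x m‖ ≤ ∑' m : ℕ+, ‖cC k m‖ * ‖x m‖ := by
    have h' := norm_tsum_le_tsum_norm (f := fun m : ℕ+ => cC k m * x m)
      (by simpa only [norm_mul] using hs)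
    simpa only [norm_mul] using h'
  calc (1 + ((k:ℕ):ℝ)^2) * ‖∑' m : ℕ+, cC k m * x m‖
      ≤ (1 + ((k:ℕ):ℝ)^2) * ∑' m : ℕ+, ‖cC k m‖ * ‖x m‖ :=
        mul_le_mul_of_nonneg_left hnorm (by positivity)
    _ = ∑' m : ℕ+, gfun x (m, k) := by
        rw [← tsum_mul_left]
        exact tsum_congr fun m => rfl

end G2P

namespace G2P

lemma sep_summable {u v : ℕ+ → ℂ} (hu : Summable fun n => ‖u n‖) (hv : Summable fun n => ‖v n‖) :
    Summable fun p : ℕ+ × ℕ+ => u p.1 * v p.2 := by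
  apply Summable.of_norm
  have h := hu.mul_of_nonneg hv (fun n => norm_nonneg _) (fun n => norm_nonneg _)
  simpa only [norm_mul] using h

lemma sep_tsum {u v : ℕ+ → ℂ} (hu : Summable fun n => ‖u n‖) (hv : Summable fun n => ‖v n‖) :
    ∑' p : ℕ+ × ℕ+, u p.1 * v p.2 = (∑' n, u n) * (∑' m, v m) :=
  (hu.of_norm.hasSum.mul hv.of_norm.hasSum (sep_summable hu hv)).tsum_eq

def f1 (x : NSeq) (n : ℕ+) : ℂ := ((n:ℕ):ℂ) * (starRingEnd ℂ) (x n)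
def g1 (x : NSeq) (m : ℕ+) : ℂ := ((((m:ℕ):ℂ))^2 - ((m:ℕ):ℂ))/2 * x m
def f2 (x : NSeq) (n : ℕ+) : ℂ := (((n:ℕ):ℂ))^2/2 * (starRingEnd ℂ) (x n)
def g2 (x : NSeq) (m : ℕ+) : ℂ := ((m:ℕ):ℂ) * x m

section sums
variable {x : NSeq}

lemma sumf1 (h : Summable fun n : ℕ+ => w n * ‖x n‖) : Summable fun n => ‖f1 x n‖ := by
  apply sumXR h (fun n => norm_nonneg _)
  intro n
  unfold f1
  rw [norm_mul, RCnorm_conj, Complex.norm_natCast]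
  exact mul_le_mul_of_nonneg_right (coe_le_w n) (norm_nonneg _)

lemma sumg1 (h : Summable fun n : ℕ+ => w n * ‖x n‖) : Summable fun m => ‖g1 x m‖ := by
  apply sumXR h (fun m => norm_nonneg _)
  intro m
  unfold g1
  have hcast : ((((m:ℕ):ℂ))^2 - ((m:ℕ):ℂ))/2 = (((((m:ℕ):ℝ))^2 - ((m:ℕ):ℝ))/2 : ℝ) := by
    push_cast; ring
  rw [norm_mul, hcast, Complex.norm_real, Real.norm_eq_abs]
  have h1 := one_le_coe m
  have habs : |((((m:ℕ):ℝ))^2 - ((m:ℕ):ℝ))/2| ≤ w m := by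
    rw [_root_.abs_of_nonneg (by nlinarith)]
    unfold w; nlinarith
  exact mul_le_mul_of_nonneg_right habs (norm_nonneg _)

lemma sumf2 (h : Summable fun n : ℕ+ => w n * ‖x n‖) : Summable fun n => ‖f2 x n‖ := by
  apply sumXR h (fun n => norm_nonneg _)
  intro n
  unfold f2
  have hcast : (((n:ℕ):ℂ))^2/2 = ((((n:ℕ):ℝ))^2/2 : ℝ) := by push_cast; ring
  rw [norm_mul, hcast, Complex.norm_real, Real.norm_eq_abs, RCnorm_conj]
  have h1 := one_le_coe n
  have habs : |(((n:ℕ):ℝ))^2/2| ≤ w n := by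
    rw [_root_.abs_of_nonneg (by positivity)]
    unfold w; nlinarith
  exact mul_le_mul_of_nonneg_right habs (norm_nonneg _)

lemma sumg2 (h : Summable fun n : ℕ+ => w n * ‖x n‖) : Summable fun m => ‖g2 x m‖ := by
  apply sumXR h (fun m => norm_nonneg _)
  intro m
  unfold g2
  rw [norm_mul, Complex.norm_natCast]
  exact mul_le_mul_of_nonneg_right (coe_le_w m) (norm_nonneg _)

lemma tsum_f1 (m0 : (∑' m : ℕ+, ((m:ℕ):ℂ) * x m) = 0) : (∑' n : ℕ+, f1 x n) = 0 := by
  have hc : ∀ n : ℕ+, f1 x n = star (((n:ℕ):ℂ) * x n) := by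
    intro n
    unfold f1
    rw [star_mul', star_natCast, starRingEnd_apply]
  rw [tsum_congr hc, ← tsum_star, m0, star_zero]

lemma tsum_g2 (m0 : (∑' m : ℕ+, ((m:ℕ):ℂ) * x m) = 0) : (∑' m : ℕ+, g2 x m) = 0 := m0

end sums

end G2P


open G2P

/-- For x₁, x₂ ∈ ℓ^{1,4} with ∑ m·x_ν[m] = 0 : G₀x_ν ∈ ℓ^{1,2}, the double series
⟨x₁, G₂x₂⟩ converges absolutely, and ⟨x₁, G₂x₂⟩ = −⟨G₀x₁, G₀x₂⟩. -/
theorem G2_pairing (x₁ x₂ : NSeq)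
    (h1 : Summable fun n : ℕ+ => (1 + ((n : ℕ) : ℝ) ^ 2) ^ 2 * ‖x₁ n‖)
    (h2 : Summable fun n : ℕ+ => (1 + ((n : ℕ) : ℝ) ^ 2) ^ 2 * ‖x₂ n‖)
    (m1 : (∑' m : ℕ+, ((m : ℕ) : ℂ) * x₁ m) = 0)
    (m2 : (∑' m : ℕ+, ((m : ℕ) : ℂ) * x₂ m) = 0) :
    (Summable fun k : ℕ+ =>
      (1 + ((k : ℕ) : ℝ) ^ 2) * ‖∑' m : ℕ+, ((min k m : ℕ) : ℂ) * x₁ m‖) ∧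
    (Summable fun k : ℕ+ =>
      (1 + ((k : ℕ) : ℝ) ^ 2) * ‖∑' m : ℕ+, ((min k m : ℕ) : ℂ) * x₂ m‖) ∧
    (Summable fun p : ℕ+ × ℕ+ =>
      ‖(starRingEnd ℂ) (x₁ p.1) * ((G2ker p.1 p.2 : ℝ) : ℂ) * x₂ p.2‖) ∧
    (∑' p : ℕ+ × ℕ+, (starRingEnd ℂ) (x₁ p.1) * ((G2ker p.1 p.2 : ℝ) : ℂ) * x₂ p.2)
      = -∑' k : ℕ+,
          (starRingEnd ℂ) (∑' m : ℕ+, ((min k m : ℕ) : ℂ) * x₁ m)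
            * (∑' m : ℕ+, ((min k m : ℕ) : ℂ) * x₂ m) := by
  have h1' : Summable fun n : ℕ+ => w n * ‖x₁ n‖ := h1
  have h2' : Summable fun n : ℕ+ => w n * ‖x₂ n‖ := h2
  have hHHn := HH_norm_summable h1' h2'
  have hHH : Summable (HH x₁ x₂) := Summable.of_norm hHHn
  refine ⟨step1 h1' m1, step1 h2' m2, ?_, ?_⟩
  · -- absolute convergence of double series
    apply Summable.of_nonneg_of_le (fun p => norm_nonneg _) _
      (h1'.mul_of_nonneg h2' (fun n => mul_nonneg (w_nonneg n) (norm_nonneg _))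
        (fun m => mul_nonneg (w_nonneg m) (norm_nonneg _)))
    rintro ⟨n, m⟩
    rw [norm_mul, norm_mul, RCnorm_conj, Complex.norm_real, Real.norm_eq_abs]
    have hb := G2_bound n m
    nlinarith [norm_nonneg (x₁ n), norm_nonneg (x₂ m), abs_nonneg (G2ker n m),
      w_nonneg n, w_nonneg m,
      mul_nonneg (norm_nonneg (x₁ n)) (norm_nonneg (x₂ m))]
  · -- the identity
    have hpt : ∀ p : ℕ+ × ℕ+,
        (starRingEnd ℂ) (x₁ p.1) * ((G2ker p.1 p.2 : ℝ):ℂ) * x₂ p.2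
          = (f1 x₁ p.1 * g1 x₂ p.2 + f2 x₁ p.1 * g2 x₂ p.2)
              - ∑' k : ℕ+, HH x₁ x₂ (p, k) := by
      rintro ⟨n, m⟩
      have hq : (∑' k : ℕ+, HH x₁ x₂ ((n,m), k))
          = (starRingEnd ℂ) (x₁ n) * x₂ m * (∑' k : ℕ+, cC k n * cC k m) := by
        simp only [HH]
        exact tsum_mul_left
      rw [hq, Qsum n m]
      simp only [f1, g1, f2, g2]
      ring
    have hT1 : Summable fun p : ℕ+ × ℕ+ => f1 x₁ p.1 * g1 x₂ p.2 :=
      sep_summable (sumf1 h1') (sumg1 h2')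
    have hT2 : Summable fun p : ℕ+ × ℕ+ => f2 x₁ p.1 * g2 x₂ p.2 :=
      sep_summable (sumf2 h1') (sumg2 h2')
    have hQs : Summable fun p : ℕ+ × ℕ+ => ∑' k : ℕ+, HH x₁ x₂ (p, k) := hHH.prod
    have hQeq : (∑' p : ℕ+ × ℕ+, ∑' k : ℕ+, HH x₁ x₂ (p, k))
        = ∑' k : ℕ+,
            (starRingEnd ℂ) (∑' m : ℕ+, ((min k m : ℕ):ℂ) * x₁ m)
              * (∑' m : ℕ+, ((min k m : ℕ):ℂ) * x₂ m) := by
      rw [← Summable.tsum_prod hHH]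
      rw [← (Equiv.prodComm ℕ+ (ℕ+ × ℕ+)).tsum_eq (HH x₁ x₂)]
      have hswap : Summable fun q : ℕ+ × (ℕ+ × ℕ+) =>
          HH x₁ x₂ ((Equiv.prodComm ℕ+ (ℕ+ × ℕ+)) q) := hHH.prod_symm
      rw [Summable.tsum_prod hswap]
      apply tsum_congr
      intro k
      simp only [Equiv.prodComm_apply, Prod.swap_prod_mk]
      have hu : Summable fun n : ℕ+ => ‖(starRingEnd ℂ) (x₁ n) * cC k n‖ := by
        apply sumXR h1' (fun n => norm_nonneg _)
        intro n
        rw [norm_mul, RCnorm_conj]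
        calc ‖x₁ n‖ * ‖cC k n‖ ≤ ‖x₁ n‖ * w n :=
              mul_le_mul_of_nonneg_left (le_trans (norm_cC_le k n) (coe_le_w n)) (norm_nonneg _)
          _ = w n * ‖x₁ n‖ := mul_comm _ _
      have hv : Summable fun m : ℕ+ => ‖x₂ m * cC k m‖ := by
        apply sumXR h2' (fun m => norm_nonneg _)
        intro m
        rw [norm_mul]
        calc ‖x₂ m‖ * ‖cC k m‖ ≤ ‖x₂ m‖ * w m :=
              mul_le_mul_of_nonneg_left (le_trans (norm_cC_le k m) (coe_le_w m)) (norm_nonneg _)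
          _ = w m * ‖x₂ m‖ := mul_comm _ _
      have hA1 : (∑' n : ℕ+, (starRingEnd ℂ) (x₁ n) * cC k n)
          = (starRingEnd ℂ) (∑' m : ℕ+, ((min k m : ℕ):ℂ) * x₁ m) := by
        calc ∑' n : ℕ+, (starRingEnd ℂ) (x₁ n) * cC k n
            = ∑' n : ℕ+, star (cC k n * x₁ n) :=
              tsum_congr (fun n => by
                rw [star_mul', star_cC, starRingEnd_apply]; exact mul_comm _ _)
          _ = star (∑' n : ℕ+, cC k n * x₁ n) := tsum_star.symm
          _ = (starRingEnd ℂ) (∑' m : ℕ+, ((min k m : ℕ):ℂ) * x₁ m) := by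
              rw [A_eq h1' m1 k, starRingEnd_apply]
      have hA2 : (∑' m : ℕ+, x₂ m * cC k m) = ∑' m : ℕ+, ((min k m : ℕ):ℂ) * x₂ m := by
        calc ∑' m : ℕ+, x₂ m * cC k m = ∑' m : ℕ+, cC k m * x₂ m :=
              tsum_congr (fun m => mul_comm _ _)
          _ = ∑' m : ℕ+, ((min k m : ℕ):ℂ) * x₂ m := (A_eq h2' m2 k).symm
      calc ∑' p : ℕ+ × ℕ+, HH x₁ x₂ (p, k)
          = ∑' p : ℕ+ × ℕ+, ((starRingEnd ℂ) (x₁ p.1) * cC k p.1) * (x₂ p.2 * cC k p.2) :=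
            tsum_congr (fun p => by simp only [HH]; ring)
        _ = (∑' n : ℕ+, (starRingEnd ℂ) (x₁ n) * cC k n) * (∑' m : ℕ+, x₂ m * cC k m) :=
            sep_tsum hu hv
        _ = _ := by rw [hA1, hA2]
    calc (∑' p : ℕ+ × ℕ+, (starRingEnd ℂ) (x₁ p.1) * ((G2ker p.1 p.2 : ℝ):ℂ) * x₂ p.2)
        = ∑' p : ℕ+ × ℕ+, ((f1 x₁ p.1 * g1 x₂ p.2 + f2 x₁ p.1 * g2 x₂ p.2)
            - ∑' k : ℕ+, HH x₁ x₂ (p, k)) := tsum_congr hpt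
      _ = (∑' p : ℕ+ × ℕ+, (f1 x₁ p.1 * g1 x₂ p.2 + f2 x₁ p.1 * g2 x₂ p.2))
            - ∑' p : ℕ+ × ℕ+, ∑' k : ℕ+, HH x₁ x₂ (p, k) := Summable.tsum_sub (hT1.add hT2) hQs
      _ = ((∑' n : ℕ+, f1 x₁ n) * (∑' m : ℕ+, g1 x₂ m)
            + (∑' n : ℕ+, f2 x₁ n) * (∑' m : ℕ+, g2 x₂ m))
            - ∑' p : ℕ+ × ℕ+, ∑' k : ℕ+, HH x₁ x₂ (p, k) := by
          rw [Summable.tsum_add hT1 hT2, sep_tsum (sumf1 h1') (sumg1 h2'),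
            sep_tsum (sumf2 h1') (sumg2 h2')]
      _ = -∑' p : ℕ+ × ℕ+, ∑' k : ℕ+, HH x₁ x₂ (p, k) := by
          rw [tsum_f1 m1, tsum_g2 m2, zero_mul, mul_zero, add_zero, zero_sub]
      _ = _ := by rw [hQeq]
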